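/- Let X be a uniformly convex Banach space, 0 < ε ≤ 2, and let δ > 0 satisfy δ ≤ (1/2)·δ_X(ε − δ). If x ∈ S_X, x' ∈ X, and T : X → Y is a linear contraction such that |1 − ‖x'‖| < δ, ‖Tx‖ > 1 − δ, and ‖Tx − Tx'‖ < δ, then ‖x − x'‖ < ε. -/

import Mathlib

/-!
Normalize `x'` to the unit vector `v = x' / ‖x'‖`, which is within `δ` of `x'`.
If `‖x - x'‖ ≥ ε` then `‖x - v‖ ≥ ε - δ`, so the definition of `δ_X` forces
`‖x + v‖ ≤ 2 - 2 δ_X(ε - δ) ≤ 2 - 4δ`. On the other hand the contraction `T` sees `x + v` as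
`2 Tx` up to errors `‖Tx - Tx'‖ + ‖x' - v‖ < 2δ`, so `‖x + v‖ ≥ ‖T (x + v)‖ > 2 (1 - δ) - 2δ`,
a contradiction.
-/

open Filter

/-- The modulus of convexity of a normed space. -/
noncomputable def modulusOfConvexity (X : Type*) [NormedAddCommGroup X] [NormedSpace ℝ X]
    (ε : ℝ) : ℝ :=
  sInf {d : ℝ | ∃ x y : X, ‖x‖ = 1 ∧ ‖y‖ = 1 ∧ ε ≤ ‖x - y‖ ∧ d = 1 - ‖x + y‖ / 2}

/-- A normed space is uniformly convex if its modulus of convexity is positive on (0,2]. -/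
def IsUnifConvex (X : Type*) [NormedAddCommGroup X] [NormedSpace ℝ X] : Prop :=
  ∀ ε : ℝ, 0 < ε → ε ≤ 2 → 0 < modulusOfConvexity X ε

lemma bddBelow_modulusOfConvexity_set {X : Type*} [NormedAddCommGroup X] (t : ℝ) :
    BddBelow {d : ℝ | ∃ x y : X, ‖x‖ = 1 ∧ ‖y‖ = 1 ∧ t ≤ ‖x - y‖ ∧ d = 1 - ‖x + y‖ / 2} := by
  refine ⟨0, ?_⟩
  rintro d ⟨u, y, hu, hy, -, rfl⟩
  linarith [norm_add_le u y]

section ModulusOfConvexity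

variable {X : Type*} [NormedAddCommGroup X] [NormedSpace ℝ X]

lemma modulusOfConvexity_le_one_sub_half_norm_add {t : ℝ} {u y : X} (hu : ‖u‖ = 1)
    (hy : ‖y‖ = 1) (ht : t ≤ ‖u - y‖) : modulusOfConvexity X t ≤ 1 - ‖u + y‖ / 2 :=
  csInf_le (bddBelow_modulusOfConvexity_set t) ⟨u, y, hu, hy, ht, rfl⟩

lemma modulusOfConvexity_le_one {x : X} (hx : ‖x‖ = 1) (t : ℝ) : modulusOfConvexity X t ≤ 1 := by
  by_cases ht : t ≤ 2
  · have hxx : ‖x - -x‖ = 2 := by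
      rw [sub_neg_eq_add, ← two_smul ℝ x, norm_smul, hx]; norm_num
    have hx' : ‖-x‖ = 1 := by rw [norm_neg, hx]
    simpa using modulusOfConvexity_le_one_sub_half_norm_add hx hx' (hxx ▸ ht)
  · -- the defining set is empty, and `sInf ∅ = 0`
    have hempty :
        {d : ℝ | ∃ u y : X, ‖u‖ = 1 ∧ ‖y‖ = 1 ∧ t ≤ ‖u - y‖ ∧ d = 1 - ‖u + y‖ / 2} = ∅ := by
      refine Set.eq_empty_of_forall_notMem ?_
      rintro d ⟨u, y, hu, hy, htuy, -⟩
      linarith [norm_sub_le u y]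
    rw [modulusOfConvexity, hempty, Real.sInf_empty]
    exact zero_le_one

end ModulusOfConvexity

lemma norm_sub_inv_norm_smul_self {X : Type*} [NormedAddCommGroup X] [NormedSpace ℝ X] {x : X}
    (hx : x ≠ 0) : ‖x - ‖x‖⁻¹ • x‖ = |1 - ‖x‖| := by
  have hpos : 0 < ‖x‖ := norm_pos_iff.mpr hx
  calc ‖x - ‖x‖⁻¹ • x‖ = ‖(1 - ‖x‖⁻¹) • x‖ := by congr 1; module
    _ = |(1 - ‖x‖⁻¹) * ‖x‖| := by rw [norm_smul, Real.norm_eq_abs, abs_mul, abs_of_pos hpos]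
    _ = |1 - ‖x‖| := by rw [sub_mul, inv_mul_cancel₀ hpos.ne', one_mul, abs_sub_comm]

lemma two_mul_norm_apply_sub_le_norm_add {X Y : Type*} [NormedAddCommGroup X] [NormedSpace ℝ X]
    [NormedAddCommGroup Y] [NormedSpace ℝ Y] {T : X →L[ℝ] Y} (hT : ‖T‖ ≤ 1) (x x' v : X) :
    2 * ‖T x‖ - ‖T x - T x'‖ - ‖x' - v‖ ≤ ‖x + v‖ := by
  have hcontract : ∀ z, ‖T z‖ ≤ ‖z‖ := fun z => T.le_of_opNorm_le hT z |>.trans_eq (one_mul _)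
  have hdecomp : T (x + v) = (2 : ℝ) • T x - (T x - T x') - T (x' - v) := by
    simp only [map_add, map_sub]; module
  calc 2 * ‖T x‖ - ‖T x - T x'‖ - ‖x' - v‖
      ≤ ‖(2 : ℝ) • T x‖ - ‖T x - T x'‖ - ‖T (x' - v)‖ := by
        rw [norm_smul, Real.norm_two]; linarith [hcontract (x' - v)]
    _ ≤ ‖T (x + v)‖ := by
        rw [hdecomp]
        linarith [norm_sub_norm_le ((2 : ℝ) • T x) (T x - T x'),
          norm_sub_norm_le ((2 : ℝ) • T x - (T x - T x')) (T (x' - v))]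
    _ ≤ ‖x + v‖ := hcontract _

theorem stmt10_general {X : Type*} [NormedAddCommGroup X] [NormedSpace ℝ X]
    {Y : Type*} [NormedAddCommGroup Y] [NormedSpace ℝ Y]
    (ε δ : ℝ)
    (hδ : δ ≤ modulusOfConvexity X (ε - δ) / 2)
    (x x' : X) (T : X →L[ℝ] Y) (hx : ‖x‖ = 1) (hT : ‖T‖ ≤ 1)
    (h1 : |1 - ‖x'‖| < δ) (h2 : 1 - δ < ‖T x‖) (h3 : ‖T x - T x'‖ < δ) :
    ‖x - x'‖ < ε := by
  have hx' : x' ≠ 0 := by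
    rintro rfl
    norm_num at h1
    linarith [modulusOfConvexity_le_one hx (ε - δ)]
  set v : X := ‖x'‖⁻¹ • x'
  have hv : ‖v‖ = 1 := norm_smul_inv_norm hx'
  have hx'v : ‖x' - v‖ < δ := norm_sub_inv_norm_smul_self hx' ▸ h1
  by_contra! hfar
  have hxv : ε - δ ≤ ‖x - v‖ := by
    linarith [norm_sub_le_norm_sub_add_norm_sub x v x', norm_sub_rev v x']
  linarith [modulusOfConvexity_le_one_sub_half_norm_add hx hv hxv,
    two_mul_norm_apply_sub_le_norm_add hT x x' v]

theorem stmt10 {X : Type*} [NormedAddCommGroup X] [NormedSpace ℝ X] [CompleteSpace X]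
    {Y : Type*} [NormedAddCommGroup Y] [NormedSpace ℝ Y] [CompleteSpace Y]
    (hX : IsUnifConvex X) (ε δ : ℝ) (hε0 : 0 < ε) (hε2 : ε ≤ 2)
    (hδ0 : 0 < δ) (hδ : δ ≤ modulusOfConvexity X (ε - δ) / 2)
    (x x' : X) (T : X →L[ℝ] Y) (hx : ‖x‖ = 1) (hT : ‖T‖ ≤ 1)
    (h1 : |1 - ‖x'‖| < δ) (h2 : 1 - δ < ‖T x‖) (h3 : ‖T x - T x'‖ < δ) :
    ‖x - x'‖ < ε :=
  stmt10_general ε δ hδ x x' T hx hT h1 h2 h3
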